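/- If S is a Gallai-Edmonds set of a finite graph G, then S equals the set of vertices outside D(G) having a neighbor in D(G), where D(G) is the set of vertices missed by some maximum matching. Consequently, the Gallai-Edmonds set of G is unique. -/

import Mathlib

open SimpleGraph Set

variable {V : Type*} [Fintype V] [DecidableEq V]

/-- The vertex set (in `V`) of a connected component of the graph induced on `B`. -/
def compSupp (G : SimpleGraph V) (B : Set V)
    (c : (G.induce B).ConnectedComponent) : Set V :=
  Subtype.val '' c.supp

/-- `A` is (the vertex set of) a connected component of `G` restricted to `B`. -/
def IsCompOf (G : SimpleGraph V) (B : Set V) (A : Set V) : Prop :=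
  ∃ c : (G.induce B).ConnectedComponent, A = compSupp G B c

/-- The number of odd connected components of `G` restricted to `B`. -/
noncomputable def oddComps (G : SimpleGraph V) (B : Set V) : ℕ :=
  Set.ncard {c : (G.induce B).ConnectedComponent | Odd (compSupp G B c).ncard}

/-- The deficiency `df(S) = od(S) - |S|`. -/
noncomputable def df (G : SimpleGraph V) (S : Set V) : ℤ :=
  (oddComps G Sᶜ : ℤ) - S.ncard

/-- The induced subgraph on `A` has a perfect matching. -/
def HasPM (G : SimpleGraph V) (A : Set V) : Prop :=
  ∃ M : Subgraph (G.induce A), M.IsPerfectMatching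

/-- `Df(S)`: total number of vertices in components of `G - S` with no perfect matching. -/
noncomputable def Df (G : SimpleGraph V) (S : Set V) : ℕ :=
  Set.ncard (⋃ c ∈ {c : (G.induce Sᶜ).ConnectedComponent |
    ¬ HasPM G (compSupp G Sᶜ c)}, compSupp G Sᶜ c)

/-- The set of `M`-exposed vertices. -/
def exposed (G : SimpleGraph V) (M : Subgraph G) : Set V :=
  {v | v ∉ M.support}

/-- `A` induces a factor-critical graph. -/
def FactorCritical (G : SimpleGraph V) (A : Set V) : Prop :=
  ∀ v ∈ A, HasPM G (A \ {v})

/-- The neighborhood of `T ⊆ S` in the bipartite minor `⟨G,S⟩`: the odd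
`S`-components adjacent to some vertex of `T`. -/
def minorNbhd (G : SimpleGraph V) (S T : Set V) :
    Set (G.induce Sᶜ).ConnectedComponent :=
  {c | Odd (compSupp G Sᶜ c).ncard ∧ ∃ u ∈ T, ∃ w ∈ compSupp G Sᶜ c, G.Adj u w}

/-- `S` is a Gallai-Edmonds set of `G`. -/
def GallaiEdmonds (G : SimpleGraph V) (S : Set V) : Prop :=
  (∀ c : (G.induce Sᶜ).ConnectedComponent,
      Even (compSupp G Sᶜ c).ncard → HasPM G (compSupp G Sᶜ c)) ∧
  (∀ c : (G.induce Sᶜ).ConnectedComponent,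
      Odd (compSupp G Sᶜ c).ncard → FactorCritical G (compSupp G Sᶜ c)) ∧
  (∀ T ⊆ S, T.Nonempty → T.ncard + 1 ≤ (minorNbhd G S T).ncard)

/-- `w` and `w'` lie in the same `S`-component. -/
def SameComp (G : SimpleGraph V) (S : Set V) (w w' : V) : Prop :=
  ∃ c : (G.induce Sᶜ).ConnectedComponent,
    w ∈ compSupp G Sᶜ c ∧ w' ∈ compSupp G Sᶜ c

/-- `M` is a maximum matching of `G`. -/
def IsMaximumMatching (G : SimpleGraph V) (M : Subgraph G) : Prop :=
  M.IsMatching ∧ ∀ M' : Subgraph G, M'.IsMatching →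
    M'.edgeSet.ncard ≤ M.edgeSet.ncard

/-!
Every matching leaves at least `oddComps G Sᶜ - |S|` vertices exposed, all of them counted inside
the odd components of `G - S`: each odd component either contains an exposed vertex or, by
parity, sends a matching edge into `S`, and distinct components use distinct vertices of `S`.
For a Gallai-Edmonds set the bound is attained, with any prescribed vertex `v` of an odd
component `c` exposed: the surplus of Hall's condition survives deleting `c`, so `S` can be
matched into the other odd components, and the rest is covered by perfect matchings of the even
components and near-perfect matchings of the odd ones (factor-criticality). Hence `D(G)` is the
union of the odd components; as every vertex of `S` has a neighbour there, `S` is the set of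
vertices outside `D(G)` adjacent to it, which does not depend on `S`.
-/

section

variable {V : Type*} {G : SimpleGraph V} {B : Set V}

def oddCompSet (G : SimpleGraph V) (B : Set V) : Set (G.induce B).ConnectedComponent :=
  {c | Odd (compSupp G B c).ncard}

def oddCompVerts (G : SimpleGraph V) (B : Set V) : Set V :=
  ⋃ c ∈ oddCompSet G B, compSupp G B c

lemma mem_compSupp {c : (G.induce B).ConnectedComponent} {v : V} :
    v ∈ compSupp G B c ↔ ∃ hv : v ∈ B, (G.induce B).connectedComponentMk ⟨v, hv⟩ = c := by
  simp [compSupp]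

lemma compSupp_subset (c : (G.induce B).ConnectedComponent) : compSupp G B c ⊆ B :=
  Subtype.coe_image_subset _ _

lemma compSupp_nonempty (c : (G.induce B).ConnectedComponent) : (compSupp G B c).Nonempty :=
  c.nonempty_supp.image _

lemma mem_compSupp_connectedComponentMk {v : V} (hv : v ∈ B) :
    v ∈ compSupp G B ((G.induce B).connectedComponentMk ⟨v, hv⟩) :=
  mem_compSupp.mpr ⟨hv, rfl⟩

lemma eq_of_mem_compSupp {c d : (G.induce B).ConnectedComponent} {v : V}
    (hc : v ∈ compSupp G B c) (hd : v ∈ compSupp G B d) : c = d := by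
  obtain ⟨hv, rfl⟩ := mem_compSupp.mp hc
  obtain ⟨-, rfl⟩ := mem_compSupp.mp hd
  rfl

lemma compSupp_disjoint {c d : (G.induce B).ConnectedComponent} (h : c ≠ d) :
    Disjoint (compSupp G B c) (compSupp G B d) :=
  Set.disjoint_left.mpr fun _ hc hd ↦ h (eq_of_mem_compSupp hc hd)

lemma iUnion_compSupp : ⋃ c : (G.induce B).ConnectedComponent, compSupp G B c = B :=
  Set.Subset.antisymm (Set.iUnion_subset compSupp_subset)
    fun _ hv ↦ Set.mem_iUnion.mpr ⟨_, mem_compSupp_connectedComponentMk hv⟩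

lemma mem_compSupp_of_adj {c : (G.induce B).ConnectedComponent} {v w : V}
    (hv : v ∈ compSupp G B c) (hw : w ∈ B) (h : G.Adj v w) : w ∈ compSupp G B c := by
  obtain ⟨hvB, rfl⟩ := mem_compSupp.mp hv
  refine mem_compSupp.mpr ⟨hw, (ConnectedComponent.sound ?_).symm⟩
  exact Adj.reachable (by exact h)

lemma mem_oddCompVerts {v : V} :
    v ∈ oddCompVerts G B ↔ ∃ c ∈ oddCompSet G B, v ∈ compSupp G B c := by
  simp [oddCompVerts]

lemma oddCompVerts_subset : oddCompVerts G B ⊆ B :=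
  Set.iUnion₂_subset fun c _ ↦ compSupp_subset c

lemma injective_of_forall_mem_compSupp {d : (G.induce B).ConnectedComponent → V}
    (hd : ∀ c, d c ∈ compSupp G B c) : Function.Injective d :=
  fun c c' h ↦ eq_of_mem_compSupp (hd c) (h ▸ hd c')

end

section

variable {V : Type*} {G : SimpleGraph V} {M : Subgraph G}

namespace SimpleGraph.Subgraph.IsMatching

lemma ncard_verts [Finite V] (hM : M.IsMatching) : M.verts.ncard = 2 * M.edgeSet.ncard := by
  classical
  have : Fintype M.verts := Fintype.ofFinite _
  have : DecidableRel M.coe.Adj := Classical.decRel _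
  have hsum : ∑ v : M.verts, M.coe.degree v = 2 * M.coe.edgeFinset.card := by
    convert M.coe.sum_degrees_eq_twice_card_edges using 2 with v
    congr!
  have hdeg : ∀ v : M.verts, M.coe.degree v = 1 := fun v ↦ by
    rw [M.coe_degree, Subgraph.degree_eq_one_iff_existsUnique_adj]
    exact hM v.2
  rw [Finset.sum_congr rfl fun v _ ↦ hdeg v, Finset.sum_const, smul_eq_mul, mul_one,
    Finset.card_univ] at hsum
  have hedges : M.coe.edgeFinset.card = M.edgeSet.ncard := by
    rw [← M.image_coe_edgeSet_coe,
      Set.ncard_image_of_injective _ (Sym2.map.injective Subtype.val_injective),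
      ← Nat.card_coe_set_eq, Nat.card_eq_fintype_card, SimpleGraph.edgeFinset_card]
  rw [← Nat.card_coe_set_eq, Nat.card_eq_fintype_card, hsum, hedges]

lemma exposed_eq (hM : M.IsMatching) : exposed G M = M.vertsᶜ := by
  ext v
  simp [exposed, hM.support_eq_verts]

lemma two_mul_ncard_edgeSet_add_ncard_exposed [Finite V] (hM : M.IsMatching) :
    2 * M.edgeSet.ncard + (exposed G M).ncard = Nat.card V := by
  rw [hM.exposed_eq, ← hM.ncard_verts, Set.ncard_add_ncard_compl]

lemma exists_adj_compl_of_odd [Finite V] {B : Set V} {c : (G.induce B).ConnectedComponent}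
    (hM : M.IsMatching) (hodd : Odd (compSupp G B c).ncard) (hcov : compSupp G B c ⊆ M.verts) :
    ∃ w ∈ compSupp G B c, ∃ s ∉ B, M.Adj w s := by
  by_contra! hcon
  have hmatch : (M.induce (compSupp G B c)).IsMatching := by
    intro v hv
    obtain ⟨w, hw, hwu⟩ := hM (hcov hv)
    have hwc : w ∈ compSupp G B c :=
      mem_compSupp_of_adj hv (by_contra fun hwB ↦ hcon v hv w hwB hw) (M.adj_sub hw)
    exact ⟨w, ⟨hv, hwc, hw⟩, fun y hy ↦ hwu y hy.2.2⟩
  have := hmatch.ncard_verts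
  exact Nat.not_odd_iff_even.mpr ⟨_, this.trans (two_mul _)⟩ hodd

end SimpleGraph.Subgraph.IsMatching

lemma HasPM.exists_isMatching_verts_eq {A : Set V} (h : HasPM G A) :
    ∃ M : Subgraph G, M.IsMatching ∧ M.verts = A := by
  obtain ⟨N, hN⟩ := h
  refine ⟨N.map (Embedding.induce A).toHom, hN.1.map _ Subtype.val_injective, ?_⟩
  simp only [Subgraph.map_verts, hN.2.verts_eq_univ, Set.image_univ]
  exact Subtype.range_coe

end

section

variable {V : Type*} [Finite V] {G : SimpleGraph V} {S : Set V} {M : Subgraph G}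

namespace SimpleGraph.Subgraph.IsMatching

lemma oddComps_le (hM : M.IsMatching) :
    oddComps G Sᶜ ≤ S.ncard + (exposed G M ∩ oddCompVerts G Sᶜ).ncard := by
  set covered := {c ∈ oddCompSet G Sᶜ | compSupp G Sᶜ c ⊆ M.verts}
  have hcovered : covered.ncard ≤ S.ncard := by
    have : ∀ c : covered, ∃ s : S, ∃ w ∈ compSupp G Sᶜ c, M.Adj w s := fun c ↦ by
      obtain ⟨w, hw, s, hs, hadj⟩ := hM.exists_adj_compl_of_odd c.2.1 c.2.2
      exact ⟨⟨s, not_not.mp hs⟩, w, hw, hadj⟩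
    choose s w hw hadj using this
    rw [← Nat.card_coe_set_eq, ← Nat.card_coe_set_eq]
    refine Nat.card_le_card_of_injective s fun c c' h ↦ Subtype.ext ?_
    have hww' : w c = w c' := hM.eq_of_adj_right (hadj c) (h ▸ hadj c')
    exact eq_of_mem_compSupp (hw c) (hww' ▸ hw c')
  have huncovered :
      (oddCompSet G Sᶜ \ covered).ncard ≤ (exposed G M ∩ oddCompVerts G Sᶜ).ncard := by
    have : ∀ c : ↥(oddCompSet G Sᶜ \ covered),
        ∃ v : ↥(exposed G M ∩ oddCompVerts G Sᶜ), (v : V) ∈ compSupp G Sᶜ c := fun c ↦ by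
      obtain ⟨hodd, hnot⟩ := c.2
      obtain ⟨v, hv, hvM⟩ := Set.not_subset.mp fun h ↦ hnot ⟨hodd, h⟩
      exact ⟨⟨v, hM.exposed_eq ▸ hvM, mem_oddCompVerts.mpr ⟨c, hodd, hv⟩⟩, hv⟩
    choose v hv using this
    rw [← Nat.card_coe_set_eq, ← Nat.card_coe_set_eq]
    exact Nat.card_le_card_of_injective v fun c c' h ↦
      Subtype.ext (eq_of_mem_compSupp (hv c) (h ▸ hv c'))
  have hsplit : (oddCompSet G Sᶜ \ covered).ncard + covered.ncard = oddComps G Sᶜ :=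
    Set.ncard_sdiff_add_ncard_of_subset (Set.sep_subset _ _)
  omega

lemma exposed_subset_oddCompVerts (hM : M.IsMatching)
    (hdef : (exposed G M).ncard + S.ncard = oddComps G Sᶜ) :
    exposed G M ⊆ oddCompVerts G Sᶜ := by
  have hle : (exposed G M).ncard ≤ (exposed G M ∩ oddCompVerts G Sᶜ).ncard := by
    have := hM.oddComps_le (S := S)
    omega
  rw [← Set.inter_eq_left]
  exact Set.eq_of_subset_of_ncard_le Set.inter_subset_left hle

lemma isMaximumMatching_of_ncard_exposed (hM : M.IsMatching)
    (hdef : (exposed G M).ncard + S.ncard = oddComps G Sᶜ) : IsMaximumMatching G M := by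
  refine ⟨hM, fun M' hM' ↦ ?_⟩
  have := hM'.oddComps_le (S := S)
  have := Set.ncard_le_ncard (Set.inter_subset_left (s := exposed G M') (t := oddCompVerts G Sᶜ))
  have := hM.two_mul_ncard_edgeSet_add_ncard_exposed
  have := hM'.two_mul_ncard_edgeSet_add_ncard_exposed
  omega

end SimpleGraph.Subgraph.IsMatching

end

section

variable {V : Type*} {G : SimpleGraph V} {S : Set V}
  {d : (G.induce Sᶜ).ConnectedComponent → V}

namespace GallaiEdmonds

lemma exists_isMatching_verts_eq_compSupp_sdiff (hGE : GallaiEdmonds G S)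
    (hd : ∀ c, d c ∈ compSupp G Sᶜ c) (c : (G.induce Sᶜ).ConnectedComponent) :
    ∃ P : Subgraph G, P.IsMatching ∧ P.verts = compSupp G Sᶜ c \ d '' oddCompSet G Sᶜ := by
  have hcomp : ∀ c', d c' ∈ compSupp G Sᶜ c → c' = c := fun c' h ↦ eq_of_mem_compSupp (hd c') h
  by_cases hodd : Odd (compSupp G Sᶜ c).ncard
  · have hdel : compSupp G Sᶜ c \ d '' oddCompSet G Sᶜ = compSupp G Sᶜ c \ {d c} := by
      ext v
      simp only [Set.mem_sdiff, Set.mem_image, Set.mem_singleton_iff, not_exists, not_and]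
      refine and_congr_right fun hv ↦ ⟨fun h hvd ↦ h c hodd hvd.symm, fun h c' _ hc'v ↦ ?_⟩
      exact h (hcomp c' (hc'v ▸ hv) ▸ hc'v.symm)
    rw [hdel]
    exact (hGE.2.1 c hodd (d c) (hd c)).exists_isMatching_verts_eq
  · rw [sdiff_eq_left.mpr]
    · exact (hGE.1 c (Nat.not_odd_iff_even.mp hodd)).exists_isMatching_verts_eq
    · refine Set.disjoint_left.mpr ?_
      rintro v hv ⟨c', hc', rfl⟩
      exact hodd (hcomp c' hv ▸ hc')

lemma exists_isMatching_verts_eq_compl_sdiff (hGE : GallaiEdmonds G S)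
    (hd : ∀ c, d c ∈ compSupp G Sᶜ c) :
    ∃ M : Subgraph G, M.IsMatching ∧ M.verts = Sᶜ \ d '' oddCompSet G Sᶜ := by
  choose P hP hPv using hGE.exists_isMatching_verts_eq_compSupp_sdiff hd
  refine ⟨⨆ c, P c, Subgraph.IsMatching.iSup hP fun c c' hcc' ↦ ?_, ?_⟩
  · change Disjoint (P c).support (P c').support
    rw [(hP c).support_eq_verts, (hP c').support_eq_verts, hPv, hPv]
    exact (compSupp_disjoint hcc').mono Set.sdiff_subset Set.sdiff_subset
  · simp only [Subgraph.verts_iSup, hPv, ← Set.iUnion_sdiff, iUnion_compSupp]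

/-- The matching inside the components, leaving out `d c` in each odd component `c`, together
with the edges `u -- d (f u)`. -/
lemma exists_isMatching_exposed_eq (hGE : GallaiEdmonds G S)
    {f : S → (G.induce Sᶜ).ConnectedComponent} (hf : Function.Injective f)
    (hfodd : ∀ u, f u ∈ oddCompSet G Sᶜ) (hd : ∀ c, d c ∈ compSupp G Sᶜ c)
    (hadj : ∀ u : S, G.Adj u (d (f u))) :
    ∃ M : Subgraph G, M.IsMatching ∧ exposed G M = d '' (oddCompSet G Sᶜ \ Set.range f) := by
  have hdinj := injective_of_forall_mem_compSupp hd
  have hdS : ∀ c, d c ∉ S := fun c ↦ compSupp_subset c (hd c)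
  obtain ⟨M₁, hM₁, hM₁v⟩ := hGE.exists_isMatching_verts_eq_compl_sdiff hd
  have hSdisj : Disjoint S (Set.range (d ∘ f)) :=
    Set.disjoint_right.mpr fun _ ⟨u, hu⟩ ↦ hu ▸ hdS (f u)
  obtain ⟨M₂, hM₂v, hM₂⟩ := Subgraph.IsMatching.exists_of_disjoint_sets_of_equiv hSdisj
    (Equiv.ofInjective _ (hdinj.comp hf)) hadj
  have hrange : Set.range (d ∘ f) ⊆ d '' oddCompSet G Sᶜ := by
    rintro _ ⟨u, rfl⟩
    exact ⟨f u, hfodd u, rfl⟩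
  have hdisj : Disjoint M₁.support M₂.support := by
    rw [hM₁.support_eq_verts, hM₂.support_eq_verts, hM₁v, hM₂v]
    refine Set.disjoint_left.mpr ?_
    rintro v ⟨hvS, hvX⟩ (hv | hv)
    exacts [hvS hv, hvX (hrange hv)]
  refine ⟨M₁ ⊔ M₂, hM₁.sup hM₂ hdisj, ?_⟩
  rw [(hM₁.sup hM₂ hdisj).exposed_eq, Subgraph.verts_sup, hM₁v, hM₂v, Set.image_sdiff hdinj,
    ← Set.range_comp]
  have hXS : d '' oddCompSet G Sᶜ ⊆ Sᶜ := Set.image_subset_iff.mpr fun c _ ↦ hdS c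
  ext v
  have := @hXS v
  simp only [Set.mem_compl_iff, Set.mem_union, Set.mem_sdiff] at this ⊢
  tauto

end GallaiEdmonds

end

section

variable {V : Type*} [Finite V] {G : SimpleGraph V} {S : Set V}

namespace GallaiEdmonds

lemma exists_injective_oddCompSet_adj (hGE : GallaiEdmonds G S)
    (E : Set (G.induce Sᶜ).ConnectedComponent) (hE : E.ncard ≤ 1) :
    ∃ f : S → (G.induce Sᶜ).ConnectedComponent, Function.Injective f ∧
      ∀ u : S, f u ∈ oddCompSet G Sᶜ \ E ∧ ∃ w ∈ compSupp G Sᶜ (f u), G.Adj u w := by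
  classical
  let t : S → Finset (G.induce Sᶜ).ConnectedComponent := fun u ↦
    (Set.toFinite {c | c ∈ oddCompSet G Sᶜ \ E ∧ ∃ w ∈ compSupp G Sᶜ c, G.Adj u w}).toFinset
  have hmem : ∀ u c, c ∈ t u ↔ c ∈ oddCompSet G Sᶜ \ E ∧ ∃ w ∈ compSupp G Sᶜ c, G.Adj u w :=
    fun u c ↦ Set.Finite.mem_toFinset _
  suffices hall : ∀ s : Finset S, s.card ≤ (s.biUnion t).card by
    obtain ⟨f, hf, hft⟩ := (Finset.all_card_le_biUnion_card_iff_exists_injective t).mp hall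
    exact ⟨f, hf, fun u ↦ (hmem u (f u)).mp (hft u)⟩
  intro s
  rcases s.eq_empty_or_nonempty with rfl | hs
  · simp
  let T : Set V := Subtype.val '' (s : Set S)
  have hsurplus := hGE.2.2 T (by rintro _ ⟨u, -, rfl⟩; exact u.2) (hs.to_set.image _)
  have hsub : minorNbhd G S T \ E ⊆ ↑(s.biUnion t) := by
    rintro c ⟨⟨hodd, _, ⟨u, hu, rfl⟩, w, hw, hadj⟩, hcE⟩
    simp only [Finset.coe_biUnion, Set.mem_iUnion]
    exact ⟨u, hu, (hmem u c).mpr ⟨⟨hodd, hcE⟩, w, hw, hadj⟩⟩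
  have hT : T.ncard = s.card := by
    rw [Set.ncard_image_of_injective _ Subtype.val_injective, Set.ncard_coe_finset]
  have := Set.ncard_le_ncard_sdiff_add_ncard (minorNbhd G S T) E
  have := Set.ncard_coe_finset (s.biUnion t) ▸ Set.ncard_le_ncard hsub
  omega

lemma exists_isMatching_ncard_exposed (hGE : GallaiEdmonds G S)
    (E : Set (G.induce Sᶜ).ConnectedComponent) (hE : E.ncard ≤ 1)
    {r : (G.induce Sᶜ).ConnectedComponent → V} (hr : ∀ c, r c ∈ compSupp G Sᶜ c) :
    ∃ M : Subgraph G, M.IsMatching ∧ (exposed G M).ncard + S.ncard = oddComps G Sᶜ ∧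
      r '' (E ∩ oddCompSet G Sᶜ) ⊆ exposed G M := by
  obtain ⟨f, hf, hfE⟩ := hGE.exists_injective_oddCompSet_adj E hE
  choose g hg hgadj using fun u ↦ (hfE u).2
  have hdf : ∀ u, Function.extend f g r (f u) = g u := hf.extend_apply g r
  have hd : ∀ c, Function.extend f g r c ∈ compSupp G Sᶜ c := fun c ↦ by
    by_cases h : ∃ u, f u = c
    · obtain ⟨u, rfl⟩ := h
      exact hdf u ▸ hg u
    · exact Function.extend_apply' g r c h ▸ hr c
  obtain ⟨M, hM, hMexp⟩ := hGE.exists_isMatching_exposed_eq hf (fun u ↦ (hfE u).1.1) hd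
    fun u ↦ hdf u ▸ hgadj u
  refine ⟨M, hM, ?_, ?_⟩
  · have hrange : Set.range f ⊆ oddCompSet G Sᶜ := Set.range_subset_iff.mpr fun u ↦ (hfE u).1.1
    have hS : (Set.range f).ncard = S.ncard := by
      rw [Set.ncard_range_of_injective hf, Nat.card_coe_set_eq]
    rw [hMexp, Set.ncard_image_of_injective _ (injective_of_forall_mem_compSupp hd), ← hS]
    exact Set.ncard_sdiff_add_ncard_of_subset hrange
  · rintro _ ⟨c, ⟨hcE, hodd⟩, rfl⟩
    have hc : ¬∃ u, f u = c := fun ⟨u, hu⟩ ↦ (hfE u).1.2 (hu ▸ hcE)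
    exact hMexp ▸ ⟨c, ⟨hodd, hc⟩, Function.extend_apply' g r c hc⟩

lemma ncard_exposed_of_isMaximumMatching (hGE : GallaiEdmonds G S) {M : Subgraph G}
    (hM : IsMaximumMatching G M) : (exposed G M).ncard + S.ncard = oddComps G Sᶜ := by
  choose r hr using compSupp_nonempty (G := G) (B := Sᶜ)
  obtain ⟨M₀, hM₀, hdef, -⟩ := hGE.exists_isMatching_ncard_exposed ∅ (by simp) hr
  have := hM.2 M₀ hM₀
  have := hM.1.oddComps_le (S := S)
  have := Set.ncard_le_ncard (Set.inter_subset_left (s := exposed G M) (t := oddCompVerts G Sᶜ))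
  have := hM.1.two_mul_ncard_edgeSet_add_ncard_exposed
  have := hM₀.two_mul_ncard_edgeSet_add_ncard_exposed
  omega

lemma setOf_exposed_eq_oddCompVerts (hGE : GallaiEdmonds G S) :
    {v | ∃ M : Subgraph G, IsMaximumMatching G M ∧ v ∈ exposed G M} = oddCompVerts G Sᶜ := by
  classical
  refine Set.Subset.antisymm (fun v ⟨M, hM, hv⟩ ↦ hM.1.exposed_subset_oddCompVerts
    (hGE.ncard_exposed_of_isMaximumMatching hM) hv) fun v hv ↦ ?_
  obtain ⟨c, hodd, hvc⟩ := mem_oddCompVerts.mp hv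
  choose r hr using compSupp_nonempty (G := G) (B := Sᶜ)
  have hr' : ∀ c', Function.update r c v c' ∈ compSupp G Sᶜ c' := fun c' ↦ by
    rcases eq_or_ne c' c with rfl | h
    · simpa using hvc
    · simpa [h] using hr c'
  obtain ⟨M, hM, hdef, hexp⟩ := hGE.exists_isMatching_ncard_exposed {c} (by simp) hr'
  exact ⟨M, hM.isMaximumMatching_of_ncard_exposed hdef, hexp ⟨c, ⟨rfl, hodd⟩, by simp⟩⟩

end GallaiEdmonds

end

section

variable {V : Type*} {G : SimpleGraph V} {S : Set V}

lemma GallaiEdmonds.exists_adj_oddCompVerts (hGE : GallaiEdmonds G S) {u : V} (hu : u ∈ S) :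
    ∃ w ∈ oddCompVerts G Sᶜ, G.Adj u w := by
  have hsurplus := hGE.2.2 {u} (Set.singleton_subset_iff.mpr hu) (Set.singleton_nonempty u)
  obtain ⟨c, hodd, _, rfl, w, hw, hadj⟩ :=
    Set.nonempty_of_ncard_ne_zero (s := minorNbhd G S {u}) (by simp at hsurplus; omega)
  exact ⟨w, mem_oddCompVerts.mpr ⟨c, hodd, hw⟩, hadj⟩

lemma eq_setOf_adj_oddCompVerts (hS : ∀ u ∈ S, ∃ w ∈ oddCompVerts G Sᶜ, G.Adj u w) :
    S = {u | u ∉ oddCompVerts G Sᶜ ∧ ∃ w ∈ oddCompVerts G Sᶜ, G.Adj u w} := by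
  ext u
  refine ⟨fun hu ↦ ⟨fun h ↦ oddCompVerts_subset h hu, hS u hu⟩, ?_⟩
  rintro ⟨huD, w, hw, hadj⟩
  by_contra huS
  obtain ⟨c, hodd, hwc⟩ := mem_oddCompVerts.mp hw
  exact huD (mem_oddCompVerts.mpr ⟨c, hodd, mem_compSupp_of_adj hwc huS hadj.symm⟩)

end

/-- A Gallai-Edmonds set is the neighborhood of `D(G)` outside `D(G)`;
consequently it is unique. -/
theorem stmt_11 (G : SimpleGraph V) (S : Set V) (h : GallaiEdmonds G S)
    (D : Set V)
    (hD : D = {v : V | ∃ M : Subgraph G, IsMaximumMatching G M ∧ v ∈ exposed G M}) :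
    S = {u : V | u ∉ D ∧ ∃ w ∈ D, G.Adj u w} ∧
    ∀ S' : Set V, GallaiEdmonds G S' → S' = S := by
  have hchar : ∀ S', GallaiEdmonds G S' → S' = {u : V | u ∉ D ∧ ∃ w ∈ D, G.Adj u w} :=
    fun S' hS' ↦ by
      rw [hD, hS'.setOf_exposed_eq_oddCompVerts]
      exact eq_setOf_adj_oddCompVerts fun u hu ↦ hS'.exists_adj_oddCompVerts hu
  exact ⟨hchar S h, fun S' hS' ↦ (hchar S' hS').trans (hchar S h).symm⟩
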